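/- arXiv:2204.07870 — 2 statements merged into one kernel-verified Lean document; each statement's English description precedes it below -/
import Mathlib

section
/- Fix 1 < α < 2, let q₀(t) = log(e/t), ρ(s) = (1 + ((2−α)/(α−1)) ∫_s^1 dt/(t^{1/(α−1)} q₀(t)^{1/(α−1)}))^{(α−1)/(α−2)} for s ∈ (0,1], and f(z) = (z/|z|)·ρ(|z|) for z ∈ 𝔻\{0}, f(0) = 0. Then at every z ∈ 𝔻\{0} the mapping f is differentiable and ‖f′(z)‖ = |f_z| + |f_z̄| = (1 + ((2−α)/(α−1)) ∫_{|z|}^1 dt/(t^{1/(α−1)} q₀(t)^{1/(α−1)}))^{(α−1)/(α−2)} · 1/|z| = ρ(|z|)/|z|. -/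
/-!
Near `z ≠ 0` the map is `f w = w · g ‖w‖` with `g r = ρ r / r`. Differentiating, with `r = |z|`,
`f′(z) h = f_z h + f_z̄ h̄` where `f_z = (ρ(r)/r + ρ′(r))/2` and `f_z̄ = (z/r)² (ρ′(r) - ρ(r)/r)/2`,
hence `|f_z| + |f_z̄| = max(|ρ(r)/r|, |ρ′(r)|)`.

For the given profile `ρ = A ^ β` with `A(r) = 1 + c ∫_r^1 k`, `c = (2-α)/(α-1)`, `β = (α-1)/(α-2)`
and `k` the kernel, `βc = -1` gives `ρ′ = A^(β-1) k > 0`, and `ρ′(r) < ρ(r)/r` amounts to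
`r k(r) < A(r)`. The defect `φ(u) = A(u) - u k(u)` vanishes at `u = 1` since `k(1) = 1`, and
since `c + 1 = γ = 1/(α-1)` and `k = (u log(e/u))^(-γ)`, its derivative collapses to
`φ′(u) = -γ u (u log(e/u))^(-γ-1) < 0`; so `φ(r) > 0` for `r < 1`.
-/

open MeasureTheory Set ENNReal

noncomputable section

/-- The kernel `t ↦ 1/(t^{1/(α-1)} (log(e/t))^{1/(α-1)})`. -/
def kern (α : ℝ) (t : ℝ) : ℝ :=
  1 / (t ^ (1 / (α - 1)) * (Real.log (Real.exp 1 / t)) ^ (1 / (α - 1)))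

/-- The radial profile `ρ`. -/
def rho (α : ℝ) (s : ℝ) : ℝ :=
  (1 + ((2 - α) / (α - 1)) * ∫ t in s..1, kern α t) ^ ((α - 1) / (α - 2))

/-- The radial mapping `f(z) = (z/|z|)·ρ(|z|)`, `f(0) = 0`. -/
def fmap (α : ℝ) (z : ℂ) : ℂ :=
  if z = 0 then 0 else (z / (‖z‖ : ℂ)) * (rho α ‖z‖ : ℂ)

/-- `f_z = (f_x - i f_y)/2`. -/
def wirtP (f : ℂ → ℂ) (z : ℂ) : ℂ :=
  (fderiv ℝ f z 1 - Complex.I * fderiv ℝ f z Complex.I) / 2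

/-- `f_z̄ = (f_x + i f_y)/2`. -/
def wirtM (f : ℂ → ℂ) (z : ℂ) : ℂ :=
  (fderiv ℝ f z 1 + Complex.I * fderiv ℝ f z Complex.I) / 2

theorem hasFDerivAt_norm_of_ne_zero {F : Type*} [NormedAddCommGroup F] [InnerProductSpace ℝ F]
    {x : F} (hx : x ≠ 0) : HasFDerivAt (‖·‖) (‖x‖⁻¹ • innerSL ℝ x) x := by
  have h := (hasStrictFDerivAt_norm_sq x).hasFDerivAt.sqrt (by positivity)
  simp only [Real.sqrt_sq (norm_nonneg _)] at h
  convert h using 1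
  ext y
  simp only [smul_apply, coe_innerSL_apply, smul_eq_mul, nsmul_eq_mul, Nat.cast_ofNat]
  field_simp

theorem abs_add_add_abs_sub (a b : ℝ) : |a + b| + |a - b| = 2 * max |a| |b| := by
  rcases abs_cases a with ha | ha <;> rcases abs_cases b with hb | hb <;>
    rcases abs_cases (a + b) with h₁ | h₁ <;> rcases abs_cases (a - b) with h₂ | h₂ <;>
    rw [max_def] <;> split_ifs <;> linarith

section Wirtinger

variable {f : ℂ → ℂ} {z a b : ℂ}

theorem wirtP_eq_of_hasFDerivAt
    (hf : HasFDerivAt f (a • ContinuousLinearMap.id ℝ ℂ + b • (Complex.conjCLE : ℂ →L[ℝ] ℂ)) z) :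
    wirtP f z = a := by
  simp only [wirtP, hf.fderiv, add_apply, smul_apply, ContinuousLinearMap.id_apply,
    ContinuousLinearEquiv.coe_coe, Complex.conjCLE_apply, Complex.conj_I, map_one, smul_eq_mul]
  linear_combination ((b - a) / 2) * Complex.I_sq

theorem wirtM_eq_of_hasFDerivAt
    (hf : HasFDerivAt f (a • ContinuousLinearMap.id ℝ ℂ + b • (Complex.conjCLE : ℂ →L[ℝ] ℂ)) z) :
    wirtM f z = b := by
  simp only [wirtM, hf.fderiv, add_apply, smul_apply, ContinuousLinearMap.id_apply,
    ContinuousLinearEquiv.coe_coe, Complex.conjCLE_apply, Complex.conj_I, map_one, smul_eq_mul]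
  linear_combination ((a - b) / 2) * Complex.I_sq

end Wirtinger

theorem hasFDerivAt_mul_ofReal_comp_norm {g : ℝ → ℝ} {g' : ℝ} {z : ℂ} (hz : z ≠ 0)
    (hg : HasDerivAt g g' ‖z‖) :
    HasFDerivAt (fun w : ℂ => w * g ‖w‖)
      (((g ‖z‖ + ‖z‖ * g' / 2 : ℝ) : ℂ) • ContinuousLinearMap.id ℝ ℂ
        + (z ^ 2 * g' / (2 * ‖z‖)) • (Complex.conjCLE : ℂ →L[ℝ] ℂ)) z := by
  refine ((hasFDerivAt_id (𝕜 := ℝ) z).mul ((Complex.ofRealCLM.hasFDerivAt (x := g ‖z‖)).comp z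
    (hg.comp_hasFDerivAt z (hasFDerivAt_norm_of_ne_zero hz)))).congr_fderiv
    (ContinuousLinearMap.ext fun h => ?_)
  have hr : (‖z‖ : ℂ) ≠ 0 := by exact_mod_cast norm_ne_zero_iff.2 hz
  simp only [add_apply, smul_apply,
    ContinuousLinearMap.id_apply, ContinuousLinearEquiv.coe_coe, Complex.conjCLE_apply,
    ContinuousLinearMap.comp_apply, innerSL_apply_apply, Complex.ofRealCLM_apply, Complex.inner,
    smul_eq_mul, id, Function.comp_apply]
  push_cast
  rw [Complex.re_eq_add_conj, map_mul, Complex.conj_conj]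
  field_simp
  linear_combination (h * g') * Complex.mul_conj' z

def radialMap (ρ : ℝ → ℝ) (z : ℂ) : ℂ :=
  if z = 0 then 0 else (z / (‖z‖ : ℂ)) * (ρ ‖z‖ : ℂ)

theorem fmap_eq_radialMap (α : ℝ) : fmap α = radialMap (rho α) := rfl

section RadialMap

variable {ρ : ℝ → ℝ} {ρ' : ℝ} {z : ℂ}

theorem radialMap_eventuallyEq (hz : z ≠ 0) :
    radialMap ρ =ᶠ[nhds z] fun w => w * ((ρ ‖w‖ / ‖w‖ : ℝ) : ℂ) := by
  filter_upwards [eventually_ne_nhds hz] with w hw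
  have hr : (‖w‖ : ℂ) ≠ 0 := by exact_mod_cast norm_ne_zero_iff.2 hw
  rw [radialMap, if_neg hw]
  push_cast
  field_simp

theorem hasFDerivAt_radialMap (hz : z ≠ 0) (hρ : HasDerivAt ρ ρ' ‖z‖) :
    HasFDerivAt (radialMap ρ)
      ((((ρ ‖z‖ / ‖z‖ + ρ') / 2 : ℝ) : ℂ) • ContinuousLinearMap.id ℝ ℂ
        + ((z / ‖z‖) ^ 2 * ((ρ' - ρ ‖z‖ / ‖z‖) / 2 : ℝ)) • (Complex.conjCLE : ℂ →L[ℝ] ℂ)) z := by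
  have hr : ‖z‖ ≠ 0 := norm_ne_zero_iff.2 hz
  have hg := hasFDerivAt_mul_ofReal_comp_norm hz (hρ.div (hasDerivAt_id' _) hr)
  refine (hg.congr_of_eventuallyEq (radialMap_eventuallyEq hz)).congr_fderiv ?_
  have hr' : (‖z‖ : ℂ) ≠ 0 := by exact_mod_cast hr
  simp only [Pi.div_apply]
  congr 2
  · push_cast; field_simp; ring
  · push_cast; field_simp

theorem norm_wirtP_add_norm_wirtM_radialMap (hz : z ≠ 0) (hρ : HasDerivAt ρ ρ' ‖z‖) :
    ‖wirtP (radialMap ρ) z‖ + ‖wirtM (radialMap ρ) z‖ = max |ρ ‖z‖ / ‖z‖| |ρ'| := by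
  have hf := hasFDerivAt_radialMap hz hρ
  rw [wirtP_eq_of_hasFDerivAt hf, wirtM_eq_of_hasFDerivAt hf, norm_mul, norm_pow, norm_div,
    Complex.norm_real, Complex.norm_real, Complex.norm_real, norm_norm,
    div_self (norm_ne_zero_iff.2 hz), one_pow, one_mul, Real.norm_eq_abs, Real.norm_eq_abs, abs_div, abs_div, abs_two, ← add_div,
    abs_sub_comm, abs_add_add_abs_sub]
  ring

end RadialMap

open Real

section Kernel

variable (α : ℝ) {t u s : ℝ}

theorem log_exp_one_div_pos (ht : t ∈ Ioo 0 (exp 1)) : 0 < log (exp 1 / t) :=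
  log_pos ((one_lt_div ht.1).2 ht.2)

theorem kern_eq_rpow (ht : t ∈ Ioo 0 (exp 1)) :
    kern α t = (t * log (exp 1 / t)) ^ (-(α - 1)⁻¹) := by
  rw [kern, ← mul_rpow ht.1.le (log_exp_one_div_pos ht).le,
    rpow_neg (mul_pos ht.1 (log_exp_one_div_pos ht)).le, one_div, one_div]

theorem kern_pos (ht : t ∈ Ioo 0 (exp 1)) : 0 < kern α t := by
  rw [kern_eq_rpow α ht]
  exact rpow_pos_of_pos (mul_pos ht.1 (log_exp_one_div_pos ht)) _

theorem kern_one : kern α 1 = 1 := by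
  simp [kern]

theorem hasDerivAt_mul_log_exp_one_div (hu : 0 < u) :
    HasDerivAt (fun t => t * log (exp 1 / t)) (log (exp 1 / u) - 1) u := by
  refine ((hasDerivAt_id' u).mul
    (((hasDerivAt_const u (exp 1)).div (hasDerivAt_id' u) hu.ne').log
      (div_pos (exp_pos 1) hu).ne')).congr_deriv ?_
  simp only [Pi.div_apply]
  field_simp
  ring

theorem hasDerivAt_kern (hu : u ∈ Ioo 0 (exp 1)) :
    HasDerivAt (kern α)
      (-(α - 1)⁻¹ * (u * log (exp 1 / u)) ^ (-(α - 1)⁻¹ - 1) * (log (exp 1 / u) - 1)) u := by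
  have h := (hasDerivAt_mul_log_exp_one_div hu.1).rpow_const (p := -(α - 1)⁻¹)
    (Or.inl (mul_pos hu.1 (log_exp_one_div_pos hu)).ne')
  refine h.congr_of_eventuallyEq ?_ |>.congr_deriv (by ring)
  filter_upwards [isOpen_Ioo.mem_nhds hu] with t ht using kern_eq_rpow α ht

theorem continuousOn_kern : ContinuousOn (kern α) (Ioo 0 (exp 1)) :=
  fun _t ht => (hasDerivAt_kern α ht).continuousAt.continuousWithinAt

theorem one_mem_Ioo_exp : (1 : ℝ) ∈ Ioo 0 (exp 1) :=
  ⟨one_pos, one_lt_exp_iff.2 one_pos⟩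

theorem Ioo_zero_one_subset_Ioo_exp : Ioo 0 1 ⊆ Ioo (0 : ℝ) (exp 1) :=
  Ioo_subset_Ioo_right one_mem_Ioo_exp.2.le

theorem hasDerivAt_integral_kern (hu : u ∈ Ioo 0 (exp 1)) :
    HasDerivAt (fun v => ∫ t in v..1, kern α t) (-kern α u) u :=
  intervalIntegral.integral_hasDerivAt_left
    ((continuousOn_kern α).mono
      (ordConnected_Ioo.uIcc_subset hu one_mem_Ioo_exp)).intervalIntegrable
    ((continuousOn_kern α).stronglyMeasurableAtFilter isOpen_Ioo u hu)
    ((continuousOn_kern α).continuousAt (isOpen_Ioo.mem_nhds hu))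

theorem mul_kern_lt (hα : 1 < α) (hs : s ∈ Ioo 0 1) :
    s * kern α s < 1 + (2 - α) / (α - 1) * ∫ t in s..1, kern α t := by
  set γ := (α - 1)⁻¹
  have hγ : 0 < γ := inv_pos.2 (sub_pos.2 hα)
  have hcγ : (2 - α) / (α - 1) + 1 = γ := by
    rw [div_add_one (sub_pos.2 hα).ne', show 2 - α + (α - 1) = 1 by ring, one_div]
  let φ u := 1 + (2 - α) / (α - 1) * (∫ t in u..1, kern α t) - u * kern α u
  have hφ : ∀ u ∈ Ioo 0 (exp 1),
      HasDerivAt φ (-(γ * u * (u * log (exp 1 / u)) ^ (-γ - 1))) u := by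
    intro u hu
    have hw : 0 < u * log (exp 1 / u) := mul_pos hu.1 (log_exp_one_div_pos hu)
    have hk : kern α u = (u * log (exp 1 / u)) ^ (-γ - 1) * (u * log (exp 1 / u)) := by
      rw [kern_eq_rpow α hu, ← rpow_add_one hw.ne', sub_add_cancel]
    refine ((((hasDerivAt_integral_kern α hu).const_mul _).const_add 1).sub
      ((hasDerivAt_id' u).mul (hasDerivAt_kern α hu))).congr_deriv ?_
    rw [hk]
    linear_combination (-(u * log (exp 1 / u)) * (u * log (exp 1 / u)) ^ (-γ - 1)) * hcγ
  have hIcc : Icc s 1 ⊆ Ioo 0 (exp 1) := Icc_subset_Ioo hs.1 one_mem_Ioo_exp.2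
  have hφ_anti : StrictAntiOn φ (Icc s 1) := by
    refine strictAntiOn_of_deriv_neg (convex_Icc s 1)
      (fun u hu => (hφ u (hIcc hu)).continuousAt.continuousWithinAt) fun u hu => ?_
    rw [interior_Icc] at hu
    have hu' := hIcc (Ioo_subset_Icc_self hu)
    rw [(hφ u hu').deriv, neg_neg_iff_pos]
    exact mul_pos (mul_pos hγ hu'.1) (rpow_pos_of_pos (mul_pos hu'.1 (log_exp_one_div_pos hu')) _)
  have hφ_one : φ 1 = 0 := by simp [φ, kern_one]
  have := hφ_anti (left_mem_Icc.2 hs.2.le) (right_mem_Icc.2 hs.2.le) hs.2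
  simp only [hφ_one, φ] at this
  linarith

end Kernel

section Profile

variable {α s : ℝ}

theorem integral_kern_nonneg (α : ℝ) (hs : s ∈ Ioo 0 1) : 0 ≤ ∫ t in s..1, kern α t :=
  intervalIntegral.integral_nonneg hs.2.le fun _t ht =>
    (kern_pos α (Icc_subset_Ioo hs.1 one_mem_Ioo_exp.2 ht)).le

theorem one_add_mul_integral_kern_pos (hα₁ : 1 < α) (hα₂ : α ≤ 2) (hs : s ∈ Ioo 0 1) :
    0 < 1 + (2 - α) / (α - 1) * ∫ t in s..1, kern α t := by
  have hc : 0 ≤ (2 - α) / (α - 1) := div_nonneg (by linarith) (by linarith)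
  exact add_pos_of_pos_of_nonneg one_pos (mul_nonneg hc (integral_kern_nonneg α hs))

theorem hasDerivAt_rho (hα₁ : 1 < α) (hα₂ : α < 2) (hs : s ∈ Ioo 0 1) :
    HasDerivAt (rho α)
      ((1 + (2 - α) / (α - 1) * ∫ t in s..1, kern α t) ^ ((α - 1) / (α - 2) - 1) * kern α s) s := by
  have h := (((hasDerivAt_integral_kern α (Ioo_zero_one_subset_Ioo_exp hs)).const_mul
    ((2 - α) / (α - 1))).const_add 1).rpow_const
    (p := (α - 1) / (α - 2)) (Or.inl (one_add_mul_integral_kern_pos hα₁ hα₂.le hs).ne')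
  refine h.congr_deriv ?_
  have h₁ : α - 1 ≠ 0 := by linarith
  have h₂ : α - 2 ≠ 0 := by linarith
  field_simp
  ring

theorem exists_hasDerivAt_rho_lt_div (hα₁ : 1 < α) (hα₂ : α < 2) (hs : s ∈ Ioo 0 1) :
    ∃ ρ', HasDerivAt (rho α) ρ' s ∧ 0 < ρ' ∧ ρ' < rho α s / s := by
  set A := 1 + (2 - α) / (α - 1) * ∫ t in s..1, kern α t
  have hA : 0 < A := one_add_mul_integral_kern_pos hα₁ hα₂.le hs
  have hAβ : 0 < A ^ ((α - 1) / (α - 2) - 1) := rpow_pos_of_pos hA _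
  refine ⟨_, hasDerivAt_rho hα₁ hα₂ hs,
    mul_pos hAβ (kern_pos α (Ioo_zero_one_subset_Ioo_exp hs)),
    (lt_div_iff₀ hs.1).2 ?_⟩
  calc A ^ ((α - 1) / (α - 2) - 1) * kern α s * s
      = A ^ ((α - 1) / (α - 2) - 1) * (s * kern α s) := by ring
    _ < A ^ ((α - 1) / (α - 2) - 1) * A := by gcongr; exact mul_kern_lt α hα₁ hs
    _ = rho α s := by rw [← rpow_add_one hA.ne', sub_add_cancel, rho]

end Profile

theorem fmap_norm_deriv
    (α : ℝ) (hα₁ : 1 < α) (hα₂ : α < 2)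
    (z : ℂ) (hz : z ∈ Metric.ball (0:ℂ) 1) (hz0 : z ≠ 0) :
    DifferentiableAt ℝ (fmap α) z ∧
      ‖wirtP (fmap α) z‖ + ‖wirtM (fmap α) z‖ =
        (1 + ((2 - α) / (α - 1)) * ∫ t in (‖z‖ : ℝ)..1, kern α t) ^ ((α - 1) / (α - 2))
          / ‖z‖ ∧
      ‖wirtP (fmap α) z‖ + ‖wirtM (fmap α) z‖ =
        rho α ‖z‖ / ‖z‖ := by
  have hs : ‖z‖ ∈ Ioo 0 1 := ⟨norm_pos_iff.2 hz0, mem_ball_zero_iff.1 hz⟩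
  obtain ⟨ρ', hρ', hρ'_pos, hρ'_lt⟩ := exists_hasDerivAt_rho_lt_div hα₁ hα₂ hs
  have hnorm : ‖wirtP (fmap α) z‖ + ‖wirtM (fmap α) z‖ = rho α ‖z‖ / ‖z‖ := by
    rw [fmap_eq_radialMap, norm_wirtP_add_norm_wirtM_radialMap hz0 hρ', abs_of_pos hρ'_pos,
      abs_of_pos (hρ'_pos.trans hρ'_lt), max_eq_left hρ'_lt.le]
  exact ⟨(hasFDerivAt_radialMap hz0 hρ').differentiableAt, hnorm, hnorm⟩
end
end

section
/- Let D be a domain in ℂ, let f: D → ℂ be continuous, let z₀ ∈ closure(D), and let B_* denote the set of points z ∈ D at which f has a total differential with f′(z) = 0. Then for almost every r > 0 (with respect to linear Lebesgue measure), the 1-dimensional Hausdorff measure of f(B_* ∩ S(z₀,r) ∩ D) is zero, where S(z₀,r) = {z : |z−z₀| = r}. -/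
/-!
If `f` has zero derivative relative to `s` at every point of `s`, then for each `ε > 0`
every `z ∈ s` has a relative neighbourhood on which `‖f w - f z‖ ≤ ε ‖w - z‖`. Grouping the
points by the size of that neighbourhood and cutting each group along a measurable partition
into pieces of smaller diameter makes `f` `ε`-Lipschitz on every piece, whence
`μH[d] (f '' s) ≤ ε ^ d μH[d] s`. When `μH[d] s < ∞` this forces `μH[d] (f '' s) = 0`;
a circle has finite length, so this applies to `B_* ∩ S(z₀, r)` for every radius `r`.
-/

open MeasureTheory Set Metric ENNReal Function
open scoped NNReal Topology

theorem tsum_measure_inter_le_of_pairwise_disjoint {α ι : Type*} [MeasurableSpace α]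
    [Countable ι] (μ : Measure α) {A : ι → Set α} (hA : ∀ i, MeasurableSet (A i))
    (hd : Pairwise (Disjoint on A)) (s : Set α) :
    ∑' i, μ (s ∩ A i) ≤ μ s :=
  calc ∑' i, μ (s ∩ A i) = ∑' i, μ.restrict (A i) s := by
        simp only [Measure.restrict_apply' (hA _)]
    _ = μ.restrict (⋃ i, A i) s := by
        rw [Measure.restrict_iUnion hd hA, Measure.sum_apply_of_countable]
    _ ≤ μ s := Measure.restrict_le_self s

theorem exists_small_pieces_tsum_measure_le {X : Type*} [PseudoMetricSpace X]
    [TopologicalSpace.SeparableSpace X] [MeasurableSpace X] [OpensMeasurableSpace X]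
    (μ : Measure X) (s : Set X) {δ : ℝ} (hδ : 0 < δ) :
    ∃ t : ℕ → Set X, (∀ i, t i ⊆ s) ∧ s ⊆ ⋃ i, t i ∧
      (∀ i, ∀ x ∈ t i, ∀ y ∈ t i, dist x y < δ) ∧ ∑' i, μ (t i) ≤ μ s := by
  cases isEmpty_or_nonempty X
  · exact ⟨fun _ => ∅, fun _ => empty_subset _, fun x => isEmptyElim x, by simp, by simp⟩
  obtain ⟨u, hu⟩ := TopologicalSpace.exists_dense_seq X
  set A := disjointed fun i => ball (u i) (δ / 2)
  refine ⟨fun i => s ∩ A i, fun i => inter_subset_left, fun x hx => ?_, ?_,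
    tsum_measure_inter_le_of_pairwise_disjoint μ
      (MeasurableSet.disjointed fun _ => measurableSet_ball) (disjoint_disjointed _) s⟩
  · obtain ⟨i, hi⟩ := hu.exists_dist_lt x (half_pos hδ)
    have hxA : x ∈ ⋃ i, A i := by
      rw [iUnion_disjointed]
      exact mem_iUnion.2 ⟨i, hi⟩
    obtain ⟨j, hj⟩ := mem_iUnion.1 hxA
    exact mem_iUnion.2 ⟨j, hx, hj⟩
  · rintro i x ⟨-, hx⟩ y ⟨-, hy⟩
    have hx' := mem_ball.1 (disjointed_subset _ i hx)
    have hy' := mem_ball'.1 (disjointed_subset _ i hy)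
    linarith [dist_triangle x (u i) y]

theorem hausdorffMeasure_image_le_of_dist_le_of_dist_lt {X Y : Type*} [MetricSpace X]
    [TopologicalSpace.SeparableSpace X] [MeasurableSpace X] [BorelSpace X] [MetricSpace Y]
    [MeasurableSpace Y] [BorelSpace Y] {f : X → Y} {s : Set X} {K : ℝ≥0} {δ : ℝ}
    (hδ : 0 < δ)
    (hf : ∀ x ∈ s, ∀ y ∈ s, dist x y < δ → dist (f x) (f y) ≤ K * dist x y)
    {d : ℝ} (hd : 0 ≤ d) :
    μH[d] (f '' s) ≤ (K : ℝ≥0∞) ^ d * μH[d] s := by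
  obtain ⟨t, hts, hst, htδ, hsum⟩ := exists_small_pieces_tsum_measure_le μH[d] s hδ
  have hlip : ∀ i, LipschitzOnWith K f (t i) := fun i =>
    LipschitzOnWith.of_dist_le_mul fun x hx y hy =>
      hf x (hts i hx) y (hts i hy) (htδ i x hx y hy)
  calc μH[d] (f '' s) ≤ μH[d] (⋃ i, f '' t i) :=
        measure_mono (image_iUnion ▸ image_mono hst)
    _ ≤ ∑' i, μH[d] (f '' t i) := measure_iUnion_le _
    _ ≤ ∑' i, (K : ℝ≥0∞) ^ d * μH[d] (t i) :=
        ENNReal.tsum_le_tsum fun i => (hlip i).hausdorffMeasure_image_le hd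
    _ = (K : ℝ≥0∞) ^ d * ∑' i, μH[d] (t i) := ENNReal.tsum_mul_left
    _ ≤ (K : ℝ≥0∞) ^ d * μH[d] s := by gcongr

theorem hausdorffMeasure_image_le_of_eventually_dist_le {X Y : Type*} [MetricSpace X]
    [TopologicalSpace.SeparableSpace X] [MeasurableSpace X] [BorelSpace X] [MetricSpace Y]
    [MeasurableSpace Y] [BorelSpace Y] {f : X → Y} {s : Set X} {K : ℝ≥0}
    (hf : ∀ z ∈ s, ∀ᶠ w in 𝓝[s] z, dist (f w) (f z) ≤ K * dist w z) {d : ℝ} (hd : 0 ≤ d) :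
    μH[d] (f '' s) ≤ (K : ℝ≥0∞) ^ d * μH[d] s := by
  set S : ℕ → Set X := fun n =>
    {z ∈ s | ∀ w ∈ s, dist w z < 1 / (n + 1) → dist (f w) (f z) ≤ K * dist w z}
  have hS_mono : Monotone S := fun m n hmn z hz =>
    ⟨hz.1, fun w hw hwz => hz.2 w hw (hwz.trans_le (Nat.one_div_le_one_div hmn))⟩
  have hS_cover : ⋃ n, S n = s := by
    refine Subset.antisymm (iUnion_subset fun n => sep_subset _ _) fun z hz => ?_
    obtain ⟨δ, hδ, hball⟩ :=
      Metric.eventually_nhds_iff.1 (eventually_nhdsWithin_iff.1 (hf z hz))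
    obtain ⟨n, hn⟩ := exists_nat_one_div_lt hδ
    exact mem_iUnion.2 ⟨n, hz, fun w hw hwz => hball (hwz.trans hn) hw⟩
  have hS_bound : ∀ n, μH[d] (f '' S n) ≤ (K : ℝ≥0∞) ^ d * μH[d] s := fun n =>
    (hausdorffMeasure_image_le_of_dist_le_of_dist_lt Nat.one_div_pos_of_nat
      (fun x hx y hy hxy => hy.2 x hx.1 hxy) hd).trans (by gcongr; exact sep_subset _ _)
  calc μH[d] (f '' s) = μH[d] (⋃ n, f '' S n) := by rw [← image_iUnion, hS_cover]
    _ = ⨆ n, μH[d] (f '' S n) :=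
        Monotone.measure_iUnion fun m n h => image_mono (hS_mono h)
    _ ≤ (K : ℝ≥0∞) ^ d * μH[d] s := iSup_le hS_bound

theorem hausdorffMeasure_image_eq_zero_of_hasFDerivWithinAt_zero {𝕜 E F : Type*}
    [NontriviallyNormedField 𝕜] [NormedAddCommGroup E] [NormedSpace 𝕜 E]
    [TopologicalSpace.SeparableSpace E] [MeasurableSpace E] [BorelSpace E]
    [NormedAddCommGroup F] [NormedSpace 𝕜 F] [MeasurableSpace F] [BorelSpace F]
    {f : E → F} {s : Set E} {d : ℝ} (hd : 0 < d) (hs : μH[d] s ≠ ∞)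
    (hf : ∀ z ∈ s, HasFDerivWithinAt f (0 : E →L[𝕜] F) s z) :
    μH[d] (f '' s) = 0 := by
  have hsmall : ∀ K : ℝ≥0, 0 < K → μH[d] (f '' s) ≤ (K : ℝ≥0∞) ^ d * μH[d] s :=
    fun K hK =>
      hausdorffMeasure_image_le_of_eventually_dist_le (fun z hz => by
        simpa [dist_eq_norm] using (hf z hz).isLittleO.def (NNReal.coe_pos.2 hK)) hd.le
  by_contra h0
  obtain ⟨c, hc, hlt⟩ := ENNReal.exists_nnreal_pos_mul_lt hs h0
  have hroot : ((c ^ d⁻¹ : ℝ≥0) : ℝ≥0∞) ^ d = c := by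
    rw [← ENNReal.coe_rpow_of_nonneg _ hd.le, NNReal.rpow_inv_rpow hd.ne']
  exact (hsmall _ (NNReal.rpow_pos hc)).not_gt (hroot ▸ hlt)

theorem hausdorffMeasure_one_sphere_ne_top (z : ℂ) (r : ℝ) : μH[1] (sphere z r) ≠ ∞ := by
  rcases lt_or_ge r 0 with hr | hr
  · simp [sphere_eq_empty_of_neg hr]
  rw [← abs_of_nonneg hr, ← image_circleMap_Ioc]
  refine ne_top_of_le_ne_top ?_
    ((lipschitzWith_circleMap z r).hausdorffMeasure_image_le zero_le_one _)
  simp [hausdorffMeasure_real, Real.volume_Ioc, ENNReal.mul_eq_top]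

theorem hausdorff_image_null_on_circles_of_zero_differential_general
    (D : Set ℂ)
    (f : ℂ → ℂ)
    (z₀ : ℂ)
    (Bs : Set ℂ) (hBs : Bs = {z ∈ D | HasFDerivWithinAt f (0 : ℂ →L[ℝ] ℂ) D z}) :
    ∀ᵐ r ∂(volume.restrict (Ioi (0:ℝ))),
      μH[1] (f '' (Bs ∩ sphere z₀ r ∩ D)) = 0 := by
  refine Filter.Eventually.of_forall fun r => ?_
  subst hBs
  refine hausdorffMeasure_image_eq_zero_of_hasFDerivWithinAt_zero one_pos ?_
    fun z hz => hz.1.1.2.mono fun w hw => hw.2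
  exact ne_top_of_le_ne_top (hausdorffMeasure_one_sphere_ne_top z₀ r)
    (measure_mono fun z hz => hz.1.2)

theorem hausdorff_image_null_on_circles_of_zero_differential
    (D : Set ℂ) (hD : IsOpen D) (hDconn : IsConnected D)
    (f : ℂ → ℂ) (hfc : ContinuousOn f D)
    (z₀ : ℂ) (hz₀ : z₀ ∈ closure D)
    (Bs : Set ℂ) (hBs : Bs = {z ∈ D | HasFDerivWithinAt f (0 : ℂ →L[ℝ] ℂ) D z}) :
    ∀ᵐ r ∂(volume.restrict (Ioi (0:ℝ))),
      μH[1] (f '' (Bs ∩ sphere z₀ r ∩ D)) = 0 :=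
  hausdorff_image_null_on_circles_of_zero_differential_general D f z₀ Bs hBs
end
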